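/- If G ⊂ 𝒫ⁿ is a horizontal m-Lipschitz graph and G′ ⊂ 𝒫ⁿ is a vertical m-Lipschitz graph, then ℋ^m(G ∩ G′) = 0. -/

import Mathlib

open MeasureTheory Metric Set Filter
open scoped ENNReal NNReal Topology

noncomputable section

/-- Euclidean `ℝ^(n+1)`, realized as the `L²`-product `ℝⁿ × ℝ`. -/
abbrev EucP (n : ℕ) : Type := WithLp 2 (EuclideanSpace ℝ (Fin n) × ℝ)

instance (n : ℕ) : MeasurableSpace (EucP n) := borel _
instance (n : ℕ) : BorelSpace (EucP n) := ⟨rfl⟩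

/-- The parabolic space `𝒫ⁿ = ℝⁿ × ℝ`, a type synonym of `ℝⁿ × ℝ` carrying the
parabolic metric `d(p,q) = ‖p - q‖` with `‖(x,t)‖ = √(|x|² + |t|)`. -/
def Para (n : ℕ) : Type := EuclideanSpace ℝ (Fin n) × ℝ

namespace Para

variable {n : ℕ}

instance : AddCommGroup (Para n) :=
  inferInstanceAs (AddCommGroup (EuclideanSpace ℝ (Fin n) × ℝ))

instance : Module ℝ (Para n) :=
  inferInstanceAs (Module ℝ (EuclideanSpace ℝ (Fin n) × ℝ))

/-- Build a point of `𝒫ⁿ` from a pair `(x, t)`. -/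
def ofProd (p : EuclideanSpace ℝ (Fin n) × ℝ) : Para n := p

/-- The spatial (horizontal) component `x` of `p = (x,t)`. -/
def x (p : Para n) : EuclideanSpace ℝ (Fin n) :=
  (show EuclideanSpace ℝ (Fin n) × ℝ from p).1

/-- The time (vertical) component `t` of `p = (x,t)`. -/
def t (p : Para n) : ℝ := (show EuclideanSpace ℝ (Fin n) × ℝ from p).2

lemma ext' {p q : Para n} (h1 : p.x = q.x) (h2 : p.t = q.t) : p = q := by
  have : (show EuclideanSpace ℝ (Fin n) × ℝ from p)
      = (show EuclideanSpace ℝ (Fin n) × ℝ from q) := Prod.ext h1 h2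
  exact this

lemma x_sub (p q : Para n) : (p - q).x = p.x - q.x := rfl
lemma t_sub (p q : Para n) : (p - q).t = p.t - q.t := rfl
lemma x_add (p q : Para n) : (p + q).x = p.x + q.x := rfl
lemma t_add (p q : Para n) : (p + q).t = p.t + q.t := rfl
lemma x_zero : (0 : Para n).x = 0 := rfl
lemma t_zero : (0 : Para n).t = 0 := rfl

/-- The parabolic norm `‖(x,t)‖ = √(|x|² + |t|)`. -/
def pnorm (p : Para n) : ℝ := Real.sqrt (‖p.x‖ ^ 2 + |p.t|)

lemma pnorm_zero : pnorm (0 : Para n) = 0 := by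
  simp [pnorm, x_zero, t_zero]

lemma pnorm_neg (p : Para n) : pnorm (-p) = pnorm p := by
  have hx : (-p).x = -p.x := rfl
  have ht : (-p).t = -p.t := rfl
  simp [pnorm, hx, ht]

lemma pnorm_add_le (p q : Para n) : pnorm (p + q) ≤ pnorm p + pnorm q := by
  have hx : ‖(p + q).x‖ ≤ ‖p.x‖ + ‖q.x‖ := by rw [x_add]; exact norm_add_le _ _
  have ht : |(p + q).t| ≤ |p.t| + |q.t| := by rw [t_add]; exact abs_add_le _ _
  have hB : (0:ℝ) ≤ ‖p.x‖ ^ 2 + |p.t| := by positivity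
  have hC : (0:ℝ) ≤ ‖q.x‖ ^ 2 + |q.t| := by positivity
  have h1 : ‖p.x‖ ≤ Real.sqrt (‖p.x‖ ^ 2 + |p.t|) :=
    (Real.le_sqrt (norm_nonneg _) hB).mpr (le_add_of_nonneg_right (abs_nonneg _))
  have h2 : ‖q.x‖ ≤ Real.sqrt (‖q.x‖ ^ 2 + |q.t|) :=
    (Real.le_sqrt (norm_nonneg _) hC).mpr (le_add_of_nonneg_right (abs_nonneg _))
  have e1 : Real.sqrt (‖p.x‖ ^ 2 + |p.t|) ^ 2 = ‖p.x‖ ^ 2 + |p.t| := Real.sq_sqrt hB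
  have e2 : Real.sqrt (‖q.x‖ ^ 2 + |q.t|) ^ 2 = ‖q.x‖ ^ 2 + |q.t| := Real.sq_sqrt hC
  have hmul : ‖p.x‖ * ‖q.x‖ ≤
      Real.sqrt (‖p.x‖ ^ 2 + |p.t|) * Real.sqrt (‖q.x‖ ^ 2 + |q.t|) :=
    mul_le_mul h1 h2 (norm_nonneg _) (Real.sqrt_nonneg _)
  unfold pnorm
  rw [show Real.sqrt (‖p.x‖ ^ 2 + |p.t|) + Real.sqrt (‖q.x‖ ^ 2 + |q.t|)
      = Real.sqrt ((Real.sqrt (‖p.x‖ ^ 2 + |p.t|) + Real.sqrt (‖q.x‖ ^ 2 + |q.t|)) ^ 2) from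
      (Real.sqrt_sq (by positivity)).symm]
  apply Real.sqrt_le_sqrt
  have hxx : ‖(p + q).x‖ * ‖(p + q).x‖ ≤ (‖p.x‖ + ‖q.x‖) * (‖p.x‖ + ‖q.x‖) :=
    mul_le_mul hx hx (norm_nonneg _) (by positivity)
  nlinarith [norm_nonneg (p + q).x, abs_nonneg (p + q).t]

instance : MetricSpace (Para n) where
  dist p q := pnorm (p - q)
  dist_self p := by
    show pnorm (p - p) = 0
    rw [sub_self, pnorm_zero]
  dist_comm p q := by
    show pnorm (p - q) = pnorm (q - p)
    rw [← neg_sub q p, pnorm_neg]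
  dist_triangle p q r := by
    show pnorm (p - r) ≤ pnorm (p - q) + pnorm (q - r)
    have h := pnorm_add_le (p - q) (q - r)
    rwa [sub_add_sub_cancel] at h
  eq_of_dist_eq_zero := by
    intro p q h
    have h' : pnorm (p - q) = 0 := h
    have hB : (0:ℝ) ≤ ‖(p - q).x‖ ^ 2 + |(p - q).t| := by positivity
    have h0 : ‖(p - q).x‖ ^ 2 + |(p - q).t| = 0 := by
      have := (Real.sqrt_eq_zero hB).mp h'
      exact this
    have hx : ‖(p - q).x‖ ^ 2 = 0 := by nlinarith [sq_nonneg ‖(p - q).x‖, abs_nonneg (p - q).t]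
    have ht : |(p - q).t| = 0 := by nlinarith [sq_nonneg ‖(p - q).x‖, abs_nonneg (p - q).t]
    have hx' : (p - q).x = 0 := by
      have := pow_eq_zero_iff (n := 2) (by norm_num) |>.mp hx
      exact norm_eq_zero.mp this
    have ht' : (p - q).t = 0 := abs_eq_zero.mp ht
    have : p - q = 0 := ext' (by rw [hx']; rfl) (by rw [ht']; rfl)
    exact sub_eq_zero.mp this

lemma dist_def (p q : Para n) : dist p q = pnorm (p - q) := rfl

instance : MeasurableSpace (Para n) := borel (Para n)
instance : BorelSpace (Para n) := ⟨rfl⟩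

/-- The identity map from the parabolic space to Euclidean `ℝ^(n+1)`. -/
def toEuc (p : Para n) : EucP n := WithLp.toLp 2 p

/-- The identity map from Euclidean `ℝ^(n+1)` to the parabolic space. -/
def ofEuc (p : EucP n) : Para n := WithLp.ofLp p

/-- The identity, as a linear equivalence between the parabolic space and Euclidean
`ℝ^(n+1)`. -/
def eucEquiv : Para n ≃ₗ[ℝ] EucP n where
  toFun := toEuc
  invFun := ofEuc
  map_add' _ _ := rfl
  map_smul' _ _ := rfl
  left_inv _ := rfl
  right_inv _ := rfl

/-- The orthogonal complement (in Euclidean `ℝ^(n+1)`) of a subspace of `𝒫ⁿ`. -/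
def perp (V : Submodule ℝ (Para n)) : Submodule ℝ (Para n) :=
  Submodule.comap (eucEquiv (n := n)).toLinearMap
    ((Submodule.map (eucEquiv (n := n)).toLinearMap V)ᗮ)

/-- `H(n,m)`: the horizontal homogeneous subspaces, i.e. `m`-dimensional linear
subspaces of `ℝⁿ × {0}`. -/
def Horiz (n m : ℕ) : Set (Submodule ℝ (Para n)) :=
  {V | Module.finrank ℝ V = m ∧ ∀ p ∈ V, Para.t p = 0}

/-- `V(n,m)`: the vertical homogeneous subspaces, i.e. `(m-1)`-dimensional linear
subspaces of `ℝⁿ × ℝ` containing the `t`-axis `{0} × ℝ`. -/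
def Vert (n m : ℕ) : Set (Submodule ℝ (Para n)) :=
  {V | Module.finrank ℝ V = m - 1 ∧ ofProd (0, 1) ∈ V}

/-- `P(n,m) = H(n,m) ∪ V(n,m)`, the homogeneous subspaces of parabolic Hausdorff
dimension `m`. -/
def PSet (n m : ℕ) : Set (Submodule ℝ (Para n)) := Horiz n m ∪ Vert n m

/-- The parabolic cone `X(a,V,s) = {q : d(q - a, V) < s ‖q - a‖}`. -/
def cone (a : Para n) (V : Set (Para n)) (s : ℝ) : Set (Para n) :=
  {q | Metric.infDist (q - a) V < s * dist q a}

/-- `G` is an `(m,L)`-Lipschitz graph over `V ∈ P(n,m)`: there are `A ⊆ V` and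
`g : A → V^⊥` which is `L`-Lipschitz for the parabolic norm, with
`G = {p + g(p) : p ∈ A}`. -/
def IsLipGraphOver (n m : ℕ) (L : ℝ) (V : Submodule ℝ (Para n)) (G : Set (Para n)) : Prop :=
  V ∈ PSet n m ∧ ∃ (A : Set (Para n)) (g : Para n → Para n),
    A ⊆ (V : Set (Para n)) ∧ (∀ p ∈ A, g p ∈ perp V) ∧
    (∀ p ∈ A, ∀ q ∈ A, pnorm (g p - g q) ≤ L * pnorm (p - q)) ∧
    G = (fun p => p + g p) '' A

/-- `G` is an `(m,L)`-Lipschitz graph (over some `V ∈ P(n,m)`). -/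
def IsLipGraph (n m : ℕ) (L : ℝ) (G : Set (Para n)) : Prop :=
  ∃ V, IsLipGraphOver n m L V G

/-- `E` is `(m,L)`-rectifiable: `ℋ^m`-almost all of `E` is covered by countably many
`(m,L)`-Lipschitz graphs. -/
def MLRect (n m : ℕ) (L : ℝ) (E : Set (Para n)) : Prop :=
  ∃ G : ℕ → Set (Para n), (∀ i, IsLipGraph n m L (G i)) ∧
    μH[(m : ℝ)] (E \ ⋃ i, G i) = 0

/-- `E` is LG `m`-rectifiable: for every `L > 0`, `ℋ^m`-almost all of `E` is covered
by countably many `(m,L)`-Lipschitz graphs. -/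
def LGRect (n m : ℕ) (E : Set (Para n)) : Prop :=
  ∀ L : ℝ, 0 < L → MLRect n m L E


end Para

open Para

/-!
Let `P, Q ∈ G ∩ G'` and `δ = P - Q`. Over the horizontal plane `V`, `δ = d + γ` with `d ∈ V`,
`γ ⊥ V` and `‖γ‖ ≤ L ‖d‖`. As `d` has no time component, `|δ.t| ≤ L² |d|²`, and `d.x` is the
orthogonal projection `π δ` of `δ.x` onto `x(V)`. Over the vertical plane `V' ∋ (0, 1)` the normal
part of `δ` is spatial, which gives `|δ.x|² ≲ |u δ|² + |δ.t|`, where `u` projects onto `x(V')`, a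
space of dimension `m - 2`. So on `π(G ∩ G') ⊆ x(V) ≅ ℝᵐ` the time `τ` is flat, `|Δτ| ≲ |Δξ|²`,
while `|Δξ|² ≲ |Δu|² + |Δτ|` with `u` Lipschitz into `ℝᵐ⁻²`.

Such a set is Lebesgue-null. Near a density point it is `r/N`-dense in `B(x, r)`, so a chain of
`N` steps of length `O(r/N)` shows that `τ` oscillates by `O(r²/N)` on the ball. The preimages
under `u` of the `O(e²⁻ᵐ)` cubes of side `e r` then have diameter `O(e r)`, so they cover a fraction
`O(e²)` of the ball, against density. Finally `G ∩ G'` is a Lipschitz image of its projection.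
-/

namespace Para

variable {n : ℕ}

instance : FiniteDimensional ℝ (Para n) :=
  inferInstanceAs (FiniteDimensional ℝ (EuclideanSpace ℝ (Fin n) × ℝ))

def xₗ : Para n →ₗ[ℝ] EuclideanSpace ℝ (Fin n) where
  toFun := x
  map_add' := x_add
  map_smul' _ _ := rfl

lemma xₗ_apply (p : Para n) : xₗ p = p.x := rfl

lemma x_smul (a : ℝ) (p : Para n) : (a • p).x = a • p.x := rfl
lemma t_smul (a : ℝ) (p : Para n) : (a • p).t = a * p.t := rfl
lemma x_ofProd (y : EuclideanSpace ℝ (Fin n)) (s : ℝ) : (ofProd (y, s)).x = y := rfl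
lemma t_ofProd (y : EuclideanSpace ℝ (Fin n)) (s : ℝ) : (ofProd (y, s)).t = s := rfl

lemma pnorm_nonneg (p : Para n) : 0 ≤ pnorm p := Real.sqrt_nonneg _

lemma pnorm_sq (p : Para n) : pnorm p ^ 2 = ‖p.x‖ ^ 2 + |p.t| :=
  Real.sq_sqrt (by positivity)

lemma abs_t_le_pnorm_sq (p : Para n) : |p.t| ≤ pnorm p ^ 2 := by
  rw [pnorm_sq]
  exact le_add_of_nonneg_left (sq_nonneg _)

lemma norm_x_le_pnorm (p : Para n) : ‖p.x‖ ≤ pnorm p :=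
  Real.le_sqrt_of_sq_le (le_add_of_nonneg_right (abs_nonneg _))

lemma pnorm_of_t_eq_zero {p : Para n} (h : p.t = 0) : pnorm p = ‖p.x‖ := by
  simp [pnorm, h]

lemma inner_eucEquiv (p q : Para n) :
    inner ℝ (eucEquiv p) (eucEquiv q) = inner ℝ p.x q.x + p.t * q.t := by
  rw [WithLp.prod_inner_apply, RCLike.inner_apply', conj_trivial]
  rfl

lemma mem_perp_iff {V : Submodule ℝ (Para n)} {γ : Para n} :
    γ ∈ perp V ↔ ∀ v ∈ V, inner ℝ γ.x v.x + γ.t * v.t = 0 := by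
  simp only [perp, Submodule.mem_comap, Submodule.mem_orthogonal', Submodule.mem_map,
    forall_exists_index, and_imp, forall_apply_eq_imp_iff₂]
  refine forall₂_congr fun v _ => ?_
  exact Iff.of_eq (congrArg (· = 0) (inner_eucEquiv γ v))

lemma x_mem_orthogonal_map_of_mem_perp {V : Submodule ℝ (Para n)} {γ : Para n}
    (hγ : γ ∈ perp V) (ht : ∀ v ∈ V, γ.t * v.t = 0) : γ.x ∈ (V.map xₗ)ᗮ := by
  rw [Submodule.mem_orthogonal']
  rintro _ ⟨v, hv, rfl⟩
  have h := mem_perp_iff.mp hγ v hv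
  rwa [ht v hv, add_zero] at h

lemma starProjection_map_xₗ {V : Submodule ℝ (Para n)} {d γ : Para n} (hd : d ∈ V)
    (hγ : γ ∈ perp V) (ht : ∀ v ∈ V, γ.t * v.t = 0) :
    (V.map xₗ).starProjection (d + γ).x = d.x :=
  Submodule.eq_starProjection_of_mem_orthogonal' (Submodule.mem_map_of_mem hd)
    (x_mem_orthogonal_map_of_mem_perp hγ ht) rfl

def lipCone (V : Submodule ℝ (Para n)) (L : ℝ) : Set (Para n) :=
  {δ | ∃ d ∈ V, ∃ γ ∈ perp V, pnorm γ ≤ L * pnorm d ∧ δ = d + γ}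

lemma IsLipGraphOver.sub_mem_lipCone {m : ℕ} {L : ℝ} {V : Submodule ℝ (Para n)}
    {G : Set (Para n)} (hG : IsLipGraphOver n m L V G) {P Q : Para n} (hP : P ∈ G)
    (hQ : Q ∈ G) : P - Q ∈ lipCone V L := by
  obtain ⟨-, A, g, hAV, hgV, hgL, rfl⟩ := hG
  obtain ⟨p, hp, rfl⟩ := hP
  obtain ⟨q, hq, rfl⟩ := hQ
  exact ⟨p - q, V.sub_mem (hAV hp) (hAV hq), g p - g q, (perp V).sub_mem (hgV p hp) (hgV q hq),
    hgL p hp q hq, add_sub_add_comm p (g p) q (g q)⟩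

section Horizontal

variable {V : Submodule ℝ (Para n)} {L : ℝ} {δ : Para n}

lemma norm_orthogonalProjectionOnto_map_xₗ (hV : ∀ p ∈ V, p.t = 0) {d γ : Para n} (hd : d ∈ V)
    (hγ : γ ∈ perp V) :
    ‖(V.map xₗ).orthogonalProjectionOnto (d + γ).x‖ = pnorm d := by
  rw [Submodule.coe_norm, ← Submodule.starProjection_apply,
    starProjection_map_xₗ hd hγ fun v hv => by rw [hV v hv, mul_zero],
    pnorm_of_t_eq_zero (hV d hd)]

lemma abs_t_le_of_mem_lipCone (hV : ∀ p ∈ V, p.t = 0) (hδ : δ ∈ lipCone V L) :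
    |δ.t| ≤ L ^ 2 * ‖(V.map xₗ).orthogonalProjectionOnto δ.x‖ ^ 2 := by
  obtain ⟨d, hd, γ, hγ, hγL, rfl⟩ := hδ
  rw [norm_orthogonalProjectionOnto_map_xₗ hV hd hγ, t_add, hV d hd, zero_add, ← mul_pow]
  exact (abs_t_le_pnorm_sq γ).trans (pow_le_pow_left₀ (pnorm_nonneg γ) hγL 2)

lemma pnorm_le_of_mem_lipCone (hV : ∀ p ∈ V, p.t = 0) (hδ : δ ∈ lipCone V L) :
    pnorm δ ≤ (1 + L) * ‖(V.map xₗ).orthogonalProjectionOnto δ.x‖ := by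
  obtain ⟨d, hd, γ, hγ, hγL, rfl⟩ := hδ
  rw [norm_orthogonalProjectionOnto_map_xₗ hV hd hγ]
  linarith [pnorm_add_le d γ]

lemma finrank_map_xₗ_of_horizontal (hV : ∀ p ∈ V, p.t = 0) :
    Module.finrank ℝ (V.map xₗ) = Module.finrank ℝ V := by
  rw [← LinearMap.range_domRestrict]
  refine LinearMap.finrank_range_of_inj fun p q hpq => Subtype.ext (ext' hpq ?_)
  rw [hV p p.2, hV q q.2]

end Horizontal

section Vertical

variable {V : Submodule ℝ (Para n)} {L : ℝ} {δ : Para n}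

lemma t_eq_zero_of_mem_perp (hV : ofProd (0, 1) ∈ V) {γ : Para n} (hγ : γ ∈ perp V) :
    γ.t = 0 := by
  simpa [x_ofProd, t_ofProd] using mem_perp_iff.mp hγ _ hV

lemma norm_x_sq_le_of_mem_lipCone (hV : ofProd (0, 1) ∈ V) (hδ : δ ∈ lipCone V L) :
    ‖δ.x‖ ^ 2 ≤ (1 + L ^ 2) * (‖(V.map xₗ).orthogonalProjectionOnto δ.x‖ ^ 2 + |δ.t|) := by
  obtain ⟨d, hd, γ, hγ, hγL, rfl⟩ := hδ
  have hγt := t_eq_zero_of_mem_perp hV hγ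
  have hproj : (V.map xₗ).starProjection (d + γ).x = d.x :=
    starProjection_map_xₗ hd hγ fun v _ => by rw [hγt, zero_mul]
  rw [Submodule.coe_norm, ← Submodule.starProjection_apply, hproj, t_add, hγt, add_zero]
  have hpyth : ‖(d + γ).x‖ ^ 2 = ‖d.x‖ ^ 2 + ‖γ.x‖ ^ 2 := by
    have hdx : d.x ∈ V.map xₗ := Submodule.mem_map_of_mem hd
    rw [x_add, norm_add_sq_real, Submodule.inner_right_of_mem_orthogonal hdx
      (x_mem_orthogonal_map_of_mem_perp hγ fun v _ => by rw [hγt, zero_mul]), mul_zero, add_zero]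
  have hγx : ‖γ.x‖ ^ 2 ≤ L ^ 2 * (‖d.x‖ ^ 2 + |d.t|) := by
    rw [← pnorm_of_t_eq_zero hγt, ← pnorm_sq, ← mul_pow]
    exact pow_le_pow_left₀ (pnorm_nonneg γ) hγL 2
  nlinarith [abs_nonneg d.t, sq_nonneg ‖d.x‖]

lemma finrank_map_xₗ_add_one_of_vertical (hV : ofProd (0, 1) ∈ V) :
    Module.finrank ℝ (V.map xₗ) + 1 = Module.finrank ℝ V := by
  have hker : LinearMap.ker (xₗ.domRestrict V) = ℝ ∙ ⟨ofProd (0, 1), hV⟩ := by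
    ext v
    rw [LinearMap.mem_ker, Submodule.mem_span_singleton]
    constructor
    · intro hv
      refine ⟨v.1.t, Subtype.ext (ext' ?_ ?_)⟩
      · rw [Submodule.coe_smul, x_smul, x_ofProd, smul_zero]
        exact hv.symm
      · rw [Submodule.coe_smul, t_smul, t_ofProd, mul_one]
    · rintro ⟨a, rfl⟩
      rw [LinearMap.domRestrict_apply, Submodule.coe_smul, map_smul, xₗ_apply, x_ofProd,
        smul_zero]
  have hne : (⟨ofProd (0, 1), hV⟩ : V) ≠ 0 := fun h => by
    simpa [t_ofProd, t_zero] using congrArg (fun v : V => v.1.t) h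
  rw [← LinearMap.range_domRestrict, ← finrank_span_singleton (K := ℝ) hne, ← hker]
  exact LinearMap.finrank_range_add_finrank_ker _

end Vertical

end Para

section Chaining

variable {E : Type*} [NormedAddCommGroup E]

lemma abs_sub_le_of_chain {D : Set E} {τ : E → ℝ} {a η : ℝ} (ha : 0 ≤ a)
    (hτ : ∀ p ∈ D, ∀ q ∈ D, |τ p - τ q| ≤ a * ‖p - q‖ ^ 2) {z : ℕ → E} {N : ℕ}
    (hzD : ∀ i ≤ N, z i ∈ D) (hz : ∀ i < N, ‖z i - z (i + 1)‖ ≤ η) :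
    |τ (z 0) - τ (z N)| ≤ N * (a * η ^ 2) := by
  have h := dist_le_range_sum_of_dist_le (f := fun i => τ (z i)) (d := fun _ => a * η ^ 2) N
    fun {i} hi => by
      rw [Real.dist_eq]
      exact (hτ _ (hzD i hi.le) _ (hzD (i + 1) hi)).trans (by gcongr; exact hz i hi)
  simpa [Real.dist_eq] using h

variable [NormedSpace ℝ E]

lemma exists_chain_of_forall_exists_near_segment {D : Set E} {p q : E} (hp : p ∈ D) (hq : q ∈ D)
    {ε : ℝ} (hnear : ∀ s ∈ Icc (0 : ℝ) 1, ∃ z ∈ D, ‖z - (p + s • (q - p))‖ ≤ ε) {N : ℕ}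
    (hN : 0 < N) :
    ∃ z : ℕ → E, z 0 = p ∧ z N = q ∧ (∀ i ≤ N, z i ∈ D) ∧
      ∀ i < N, ‖z i - z (i + 1)‖ ≤ 2 * ε + ‖q - p‖ / N := by
  set y : ℕ → E := fun i => p + ((i : ℝ) / N) • (q - p)
  have hε : 0 ≤ ε := by
    obtain ⟨z, -, hz⟩ := hnear 0 ⟨le_rfl, zero_le_one⟩
    exact (norm_nonneg _).trans hz
  have hz : ∀ i ≤ N, ∃ z ∈ D, ‖z - y i‖ ≤ ε ∧ (i = 0 → z = p) ∧ (i = N → z = q) := by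
    intro i hi
    rcases Nat.eq_zero_or_pos i with rfl | hi0
    · exact ⟨p, hp, by simp [y, hε], fun _ => rfl, fun h => absurd h hN.ne⟩
    rcases hi.eq_or_lt with rfl | hiN
    · exact ⟨q, hq, by simp [y, hN.ne', hε], fun h => absurd h hi0.ne', fun _ => rfl⟩
    obtain ⟨z, hzD, hzy⟩ := hnear (i / N)
      ⟨by positivity, div_le_one_of_le₀ (by exact_mod_cast hi) (by positivity)⟩
    exact ⟨z, hzD, hzy, fun h => absurd h hi0.ne', fun h => absurd h hiN.ne⟩
  choose! z hzD hzy hz0 hzN using hz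
  have hy : ∀ i, ‖y (i + 1) - y i‖ = ‖q - p‖ / N := fun i => by
    simp only [y, add_sub_add_left_eq_sub, ← sub_smul]
    rw [norm_smul, Nat.cast_succ, add_div, add_sub_cancel_left, Real.norm_of_nonneg (by positivity),
      one_div_mul_eq_div]
  refine ⟨z, hz0 0 (Nat.zero_le N) rfl, hzN N le_rfl rfl, hzD, fun i hi => ?_⟩
  calc ‖z i - z (i + 1)‖ = ‖(z i - y i) - (z (i + 1) - y (i + 1)) - (y (i + 1) - y i)‖ := by
        congr 1; abel
    _ ≤ ‖z i - y i‖ + ‖z (i + 1) - y (i + 1)‖ + ‖y (i + 1) - y i‖ :=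
        (norm_sub_le _ _).trans (add_le_add_left (norm_sub_le _ _) _)
    _ ≤ ε + ε + ‖q - p‖ / N := by
        rw [hy]
        gcongr
        exacts [hzy i hi.le, hzy (i + 1) hi]
    _ = 2 * ε + ‖q - p‖ / N := by ring

lemma abs_sub_le_of_forall_exists_near_closedBall {D : Set E} {τ : E → ℝ} {a : ℝ} (ha : 0 ≤ a)
    (hτ : ∀ p ∈ D, ∀ q ∈ D, |τ p - τ q| ≤ a * ‖p - q‖ ^ 2) {x : E} {r : ℝ} {N : ℕ} (hN : 0 < N)
    (hnear : ∀ y ∈ closedBall x r, ∃ z ∈ D, ‖z - y‖ ≤ r / N) {p q : E}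
    (hp : p ∈ D ∩ closedBall x r) (hq : q ∈ D ∩ closedBall x r) :
    |τ p - τ q| ≤ 16 * a * r ^ 2 / N := by
  have hqp : ‖q - p‖ ≤ 2 * r := by
    rw [← dist_eq_norm, two_mul]
    exact dist_triangle_right q p x |>.trans (add_le_add hq.2 hp.2)
  have hr : 0 ≤ r := nonempty_closedBall.mp ⟨p, hp.2⟩
  obtain ⟨z, rfl, rfl, hzD, hz⟩ := exists_chain_of_forall_exists_near_segment hp.1 hq.1
    (fun s hs => hnear _ ((convex_closedBall x r).add_smul_sub_mem hp.2 hq.2 hs)) hN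
  calc |τ (z 0) - τ (z N)| ≤ N * (a * (2 * (r / N) + ‖z N - z 0‖ / N) ^ 2) :=
        abs_sub_le_of_chain ha hτ hzD hz
    _ ≤ N * (a * (2 * (r / N) + 2 * r / N) ^ 2) := by gcongr
    _ = 16 * a * r ^ 2 / N := by field_simp; ring

end Chaining

lemma norm_sub_le_of_floor_div_eq {ι : Type*} [Fintype ι] {δ : ℝ} (hδ : 0 < δ) {y y' : ι → ℝ}
    (h : ∀ j, ⌊y j / δ⌋ = ⌊y' j / δ⌋) : ‖y - y'‖ ≤ δ := by
  refine (pi_norm_le_iff_of_nonneg hδ.le).mpr fun j => ?_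
  have hj := (Int.abs_sub_lt_one_of_floor_eq_floor (h j)).le
  rwa [← sub_div, abs_div, abs_of_pos hδ, div_le_one hδ] at hj

lemma floor_div_mem_Icc {ι : Type*} [Fintype ι] {δ R : ℝ} (hδ : 0 < δ) {y y' : ι → ℝ}
    (h : ‖y - y'‖ ≤ R) (j : ι) :
    ⌊y j / δ⌋ ∈ Icc (⌊y' j / δ⌋ - ⌈R / δ⌉) (⌊y' j / δ⌋ + ⌈R / δ⌉) := by
  have hj : |y j / δ - y' j / δ| ≤ ⌈R / δ⌉ := by
    rw [← sub_div, abs_div, abs_of_pos hδ]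
    exact (div_le_div_of_nonneg_right ((norm_le_pi_norm (y - y') j).trans h) hδ.le).trans
      (Int.le_ceil _)
  obtain ⟨h1, h2⟩ := abs_le.mp hj
  constructor
  · rw [← Int.floor_sub_intCast]
    exact Int.floor_mono (by linarith)
  · rw [← Int.floor_add_intCast]
    exact Int.floor_mono (by linarith)

lemma card_Icc_sub_add_ceil_le {ι : Type*} [Fintype ι] [DecidableEq ι] (k : ι → ℤ) {R δ : ℝ}
    (hR : 0 ≤ R) (hδ : 0 < δ) :
    ((Finset.Icc (fun j => k j - ⌈R / δ⌉) (fun j => k j + ⌈R / δ⌉)).card : ℝ) ≤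
      (2 * R / δ + 3) ^ Fintype.card ι := by
  have hM : 0 ≤ ⌈R / δ⌉ := Int.ceil_nonneg (by positivity)
  have hcard : (Finset.Icc (fun j => k j - ⌈R / δ⌉) (fun j => k j + ⌈R / δ⌉)).card =
      (2 * ⌈R / δ⌉ + 1).toNat ^ Fintype.card ι := by
    rw [Pi.card_Icc, ← Finset.card_univ, ← Finset.prod_const]
    refine Finset.prod_congr rfl fun j _ => ?_
    rw [Int.card_Icc]
    congr 1
    ring
  have hnat : ((2 * ⌈R / δ⌉ + 1).toNat : ℝ) = 2 * ⌈R / δ⌉ + 1 := by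
    exact_mod_cast Int.toNat_of_nonneg (by omega)
  rw [hcard, Nat.cast_pow, hnat]
  refine pow_le_pow_left₀ (by positivity) ?_ _
  linarith [Int.ceil_lt_add_one (R / δ), mul_div_assoc 2 R δ]

-- The cell count times the relative cell volume in `measure_inter_closedBall_le`.
lemma exists_pos_mul_pow_le_half {b C : ℝ} (hb : 0 ≤ b) (hC : 0 ≤ C) (w : ℕ) :
    ∃ e : ℝ, 0 < e ∧ (4 * b / e + 3) ^ w * (C * e) ^ (w + 2) ≤ 1 / 2 := by
  set K := (4 * b + 3) ^ w * C ^ (w + 2)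
  have hK : 0 ≤ K := by positivity
  refine ⟨1 / (2 * K + 2), by positivity, ?_⟩
  set e := 1 / (2 * K + 2)
  have he : 0 < e := by positivity
  have he1 : e ≤ 1 := by
    rw [div_le_one (by positivity)]; linarith
  have hbase : 4 * b / e + 3 ≤ (4 * b + 3) / e := by
    rw [add_div]; gcongr; rw [le_div_iff₀ he]; linarith
  calc (4 * b / e + 3) ^ w * (C * e) ^ (w + 2) ≤ ((4 * b + 3) / e) ^ w * (C * e) ^ (w + 2) := by
        gcongr
    _ = K * e * e := by
        rw [div_pow, mul_pow, pow_succ, pow_succ e]; field_simp; ring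
    _ ≤ K * e * 1 := by gcongr
    _ ≤ 1 / 2 := by
        rw [mul_one, mul_one_div, div_le_div_iff₀ (by positivity) two_pos]; linarith

section ParabolicCoordinates

variable {E : Type*} [NormedAddCommGroup E] [MeasurableSpace E] [BorelSpace E] (μ : Measure E)
  [μ.IsAddHaarMeasure]

lemma measure_le_of_forall_norm_sub_le {ι : Type*} [Fintype ι] {D : Set E} {u : E → ι → ℝ}
    {R δ ρ : ℝ} (hδ : 0 < δ) (hR : ∀ p ∈ D, ∀ q ∈ D, ‖u p - u q‖ ≤ R)
    (hρ : ∀ p ∈ D, ∀ q ∈ D, ‖u p - u q‖ ≤ δ → ‖p - q‖ ≤ ρ) :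
    μ D ≤ ENNReal.ofReal ((2 * R / δ + 3) ^ Fintype.card ι) * μ (closedBall 0 ρ) := by
  classical
  rcases D.eq_empty_or_nonempty with rfl | ⟨p₀, hp₀⟩
  · simp
  set k : E → ι → ℤ := fun p j => ⌊u p j / δ⌋
  set I := Finset.Icc (fun j => k p₀ j - ⌈R / δ⌉) (fun j => k p₀ j + ⌈R / δ⌉)
  have hcover : D ⊆ ⋃ c ∈ I, {p ∈ D | k p = c} := fun p hp =>
    mem_biUnion (Finset.mem_Icc.mpr ⟨fun j => (floor_div_mem_Icc hδ (hR p hp p₀ hp₀) j).1,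
      fun j => (floor_div_mem_Icc hδ (hR p hp p₀ hp₀) j).2⟩) ⟨hp, rfl⟩
  have hcell : ∀ c, μ {p ∈ D | k p = c} ≤ μ (closedBall 0 ρ) := by
    intro c
    rcases eq_empty_or_nonempty {p ∈ D | k p = c} with h | ⟨p, hp, hpc⟩
    · simp [h]
    rw [← Measure.addHaar_closedBall_center μ p]
    refine measure_mono fun q ⟨hq, hqc⟩ => mem_closedBall_iff_norm.mpr (hρ q hq p hp ?_)
    exact norm_sub_le_of_floor_div_eq hδ fun j => congrFun (hqc.trans hpc.symm) j
  have hcard := card_Icc_sub_add_ceil_le (k p₀) ((norm_nonneg _).trans (hR p₀ hp₀ p₀ hp₀)) hδ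
  calc μ D ≤ ∑ c ∈ I, μ {p ∈ D | k p = c} :=
        (measure_mono hcover).trans (measure_biUnion_finset_le I _)
    _ ≤ I.card * μ (closedBall 0 ρ) := by
        simpa using Finset.sum_le_sum fun c (_ : c ∈ I) => hcell c
    _ ≤ _ := by
        gcongr
        rw [← ENNReal.ofReal_natCast]
        exact ENNReal.ofReal_le_ofReal hcard

variable [NormedSpace ℝ E] [FiniteDimensional ℝ E]

lemma exists_forall_lt_one_eventually_lt_measure_inter_closedBall {D : Set E} (hD : μ D ≠ 0) :
    ∃ x, ∀ c < 1, ∀ᶠ r in 𝓝[>] 0, c * μ (closedBall x r) < μ (D ∩ closedBall x r) := by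
  have : (ae (μ.restrict D)).NeBot := ae_neBot.mpr (by simpa using hD)
  obtain ⟨x, hx⟩ := (Besicovitch.ae_tendsto_measure_inter_div μ D).exists
  refine ⟨x, fun c hc => ?_⟩
  filter_upwards [hx.eventually (lt_mem_nhds hc), self_mem_nhdsWithin] with r hcr hr
  exact (ENNReal.lt_div_iff_mul_lt (Or.inl (measure_closedBall_pos μ x hr).ne')
    (Or.inl measure_closedBall_lt_top.ne)).mp hcr

lemma eventually_forall_closedBall_exists_near {D : Set E} {x : E}
    (hx : ∀ c < 1, ∀ᶠ r in 𝓝[>] 0, c * μ (closedBall x r) < μ (D ∩ closedBall x r))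
    {κ : ℝ} (hκ : 0 < κ) (hκ1 : κ ≤ 1) :
    ∀ᶠ r in 𝓝[>] 0, ∀ y ∈ closedBall x r, ∃ z ∈ D, ‖z - y‖ ≤ κ * r := by
  set k := ENNReal.ofReal ((κ / 2) ^ Module.finrank ℝ E)
  have hk : k ≠ 0 := by positivity
  have htwo : Tendsto (fun r : ℝ => 2 * r) (𝓝[>] 0) (𝓝[>] 0) :=
    tendsto_nhdsWithin_of_tendsto_nhds_of_eventually_within _
      ((continuous_const_mul 2).tendsto' 0 0 (mul_zero 2) |>.mono_left nhdsWithin_le_nhds)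
      (eventually_nhdsWithin_of_forall fun r (hr : 0 < r) => show 0 < 2 * r by positivity)
  have hk1 : 1 - k < 1 := ENNReal.sub_lt_self ENNReal.one_ne_top one_ne_zero hk
  filter_upwards [htwo.eventually (hx (1 - k) hk1), self_mem_nhdsWithin]
    with r hdens (hr : 0 < r) y hy
  by_contra! hfar
  have hball : closedBall y (κ * r) ⊆ closedBall x (2 * r) :=
    closedBall_subset_closedBall' (by rw [mem_closedBall] at hy; nlinarith)
  have hsmall : μ (closedBall y (κ * r)) = k * μ (closedBall x (2 * r)) := by
    rw [Measure.addHaar_closedBall_center, Measure.addHaar_closedBall_center μ x,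
      show κ * r = κ / 2 * (2 * r) by ring, Measure.addHaar_closedBall_mul μ 0 (by positivity)
      (by positivity)]
  have hsub : D ∩ closedBall x (2 * r) ⊆ closedBall x (2 * r) \ closedBall y (κ * r) :=
    fun z hz => ⟨hz.2, fun hzy => (hfar z hz.1).not_ge (mem_closedBall_iff_norm.mp hzy)⟩
  refine hdens.not_ge ((measure_mono hsub).trans ?_)
  rw [measure_sdiff hball measurableSet_closedBall.nullMeasurableSet measure_closedBall_lt_top.ne,
    hsmall, ENNReal.sub_mul fun _ _ => measure_closedBall_lt_top.ne, one_mul]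

lemma measure_inter_closedBall_le {w : ℕ} (hE : Module.finrank ℝ E = w + 2) {D : Set E}
    {τ : E → ℝ} {u : E → Fin w → ℝ} {b c e : ℝ} (hb : 0 ≤ b) (hc : 0 ≤ c) (he : 0 < e)
    (hu : ∀ p ∈ D, ∀ q ∈ D, ‖u p - u q‖ ≤ b * ‖p - q‖)
    (hτu : ∀ p ∈ D, ∀ q ∈ D, ‖p - q‖ ^ 2 ≤ c * (‖u p - u q‖ ^ 2 + |τ p - τ q|)) {x : E} {r : ℝ}
    (hr : 0 < r)
    (hosc : ∀ p ∈ D ∩ closedBall x r, ∀ q ∈ D ∩ closedBall x r, |τ p - τ q| ≤ (e * r) ^ 2) :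
    μ (D ∩ closedBall x r) ≤
      ENNReal.ofReal ((4 * b / e + 3) ^ w * (√(2 * c) * e) ^ (w + 2)) * μ (closedBall x r) := by
  set B := D ∩ closedBall x r
  have hB : ∀ p ∈ B, ∀ q ∈ B, ‖p - q‖ ≤ 2 * r := fun p hp q hq => by
    rw [← dist_eq_norm, two_mul]
    exact dist_triangle_right p q x |>.trans (add_le_add hp.2 hq.2)
  have hdiam : ∀ p ∈ B, ∀ q ∈ B, ‖u p - u q‖ ≤ 2 * b * r := fun p hp q hq =>
    (hu p hp.1 q hq.1).trans ((mul_le_mul_of_nonneg_left (hB p hp q hq) hb).trans_eq (by ring))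
  have hcell : ∀ p ∈ B, ∀ q ∈ B, ‖u p - u q‖ ≤ e * r → ‖p - q‖ ≤ √(2 * c) * e * r := by
    intro p hp q hq hpq
    refine (pow_le_pow_iff_left₀ (norm_nonneg _) (by positivity) two_ne_zero).mp ?_
    calc ‖p - q‖ ^ 2 ≤ c * (‖u p - u q‖ ^ 2 + |τ p - τ q|) := hτu p hp.1 q hq.1
      _ ≤ c * ((e * r) ^ 2 + (e * r) ^ 2) := by gcongr; exact hosc p hp q hq
      _ = (√(2 * c) * e * r) ^ 2 := by
          rw [show (√(2 * c) * e * r) ^ 2 = √(2 * c) ^ 2 * (e * r) ^ 2 by ring,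
            Real.sq_sqrt (by positivity)]
          ring
  refine (measure_le_of_forall_norm_sub_le μ (by positivity) hdiam hcell).trans_eq ?_
  rw [Measure.addHaar_closedBall_mul μ 0 (by positivity) hr.le,
    Measure.addHaar_closedBall_center μ x, ← mul_assoc, ← ENNReal.ofReal_mul (by positivity), hE,
    Fintype.card_fin, show 2 * (2 * b * r) / (e * r) = 4 * b / e by field_simp; ring]

theorem addHaar_eq_zero_of_parabolic_coordinates_pi {w : ℕ} (hE : Module.finrank ℝ E = w + 2)
    {D : Set E} {τ : E → ℝ} {u : E → Fin w → ℝ} {a b c : ℝ} (ha : 0 ≤ a) (hb : 0 ≤ b)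
    (hc : 0 ≤ c) (hτ : ∀ p ∈ D, ∀ q ∈ D, |τ p - τ q| ≤ a * ‖p - q‖ ^ 2)
    (hu : ∀ p ∈ D, ∀ q ∈ D, ‖u p - u q‖ ≤ b * ‖p - q‖)
    (hτu : ∀ p ∈ D, ∀ q ∈ D, ‖p - q‖ ^ 2 ≤ c * (‖u p - u q‖ ^ 2 + |τ p - τ q|)) : μ D = 0 := by
  by_contra hD
  obtain ⟨x, hx⟩ := exists_forall_lt_one_eventually_lt_measure_inter_closedBall μ hD
  obtain ⟨e, he, hsmall⟩ := exists_pos_mul_pow_le_half hb (Real.sqrt_nonneg (2 * c)) w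
  set N : ℕ := ⌈16 * a / e ^ 2⌉₊ + 1
  have hN : 0 < N := Nat.succ_pos _
  have hNe : 16 * a / N ≤ e ^ 2 := by
    rw [div_le_iff₀ (by positivity), ← div_le_iff₀' (by positivity)]
    exact (Nat.le_ceil _).trans (by simp [N])
  obtain ⟨r, hnear, hdens, hr⟩ := ((eventually_forall_closedBall_exists_near μ hx (κ := 1 / N)
    (by positivity) (div_le_one_of_le₀ (by exact_mod_cast hN) (by positivity))).and
    ((hx (ENNReal.ofReal (1 / 2)) (by norm_num)).and self_mem_nhdsWithin)).exists
  have hosc : ∀ p ∈ D ∩ closedBall x r, ∀ q ∈ D ∩ closedBall x r, |τ p - τ q| ≤ (e * r) ^ 2 :=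
    fun p hp q hq => (abs_sub_le_of_forall_exists_near_closedBall ha hτ hN
      (by simpa [div_eq_inv_mul] using hnear) hp hq).trans
      (by rw [mul_pow, mul_div_right_comm]; gcongr)
  refine hdens.not_ge ((measure_inter_closedBall_le μ hE hb hc he hu hτu hr hosc).trans ?_)
  gcongr

theorem addHaar_eq_zero_of_parabolic_coordinates {F : Type*} [NormedAddCommGroup F]
    [NormedSpace ℝ F] [FiniteDimensional ℝ F]
    (hEF : Module.finrank ℝ E = Module.finrank ℝ F + 2) {D : Set E} {τ : E → ℝ} {u : E → F}
    {a b c : ℝ} (ha : 0 ≤ a) (hb : 0 ≤ b) (hc : 0 ≤ c)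
    (hτ : ∀ p ∈ D, ∀ q ∈ D, |τ p - τ q| ≤ a * ‖p - q‖ ^ 2)
    (hu : ∀ p ∈ D, ∀ q ∈ D, ‖u p - u q‖ ≤ b * ‖p - q‖)
    (hτu : ∀ p ∈ D, ∀ q ∈ D, ‖p - q‖ ^ 2 ≤ c * (‖u p - u q‖ ^ 2 + |τ p - τ q|)) : μ D = 0 := by
  set φ : F ≃L[ℝ] (Fin (Module.finrank ℝ F) → ℝ) := ContinuousLinearEquiv.ofFinrankEq (by simp)
  set k := ‖φ.toContinuousLinearMap‖
  set k' := ‖φ.symm.toContinuousLinearMap‖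
  have hφ : ∀ y y', ‖φ y - φ y'‖ ≤ k * ‖y - y'‖ := fun y y' => by
    rw [← map_sub]
    exact φ.toContinuousLinearMap.le_opNorm _
  have hφ' : ∀ y y', ‖y - y'‖ ≤ k' * ‖φ y - φ y'‖ := fun y y' => by
    rw [← map_sub]
    simpa using φ.symm.toContinuousLinearMap.le_opNorm (φ (y - y'))
  refine addHaar_eq_zero_of_parabolic_coordinates_pi μ hEF (u := fun p => φ (u p))
    (b := k * b) (c := c * (k' ^ 2 + 1)) ha (by positivity) (by positivity) hτ
    (fun p hp q hq => (hφ _ _).trans ?_) fun p hp q hq => (hτu p hp q hq).trans ?_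
  · rw [mul_assoc]
    exact mul_le_mul_of_nonneg_left (hu p hp q hq) (norm_nonneg _)
  · have h := pow_le_pow_left₀ (norm_nonneg _) (hφ' (u p) (u q)) 2
    rw [mul_assoc]
    refine mul_le_mul_of_nonneg_left ?_ hc
    nlinarith [mul_nonneg (sq_nonneg k') (abs_nonneg (τ p - τ q)), sq_nonneg ‖φ (u p) - φ (u q)‖]

end ParabolicCoordinates

theorem hausdorffMeasure_eq_zero_of_parabolic_coordinates {X E F : Type*} [MetricSpace X]
    [MeasurableSpace X] [BorelSpace X] [NormedAddCommGroup E] [NormedSpace ℝ E]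
    [FiniteDimensional ℝ E] [MeasurableSpace E] [BorelSpace E] [NormedAddCommGroup F]
    [NormedSpace ℝ F] [FiniteDimensional ℝ F]
    (hEF : Module.finrank ℝ E = Module.finrank ℝ F + 2) {S : Set X} {π : X → E} {τ : X → ℝ}
    {u : X → F} {a b c K : ℝ} (ha : 0 ≤ a) (hb : 0 ≤ b) (hc : 0 ≤ c)
    (hτ : ∀ P ∈ S, ∀ Q ∈ S, |τ P - τ Q| ≤ a * ‖π P - π Q‖ ^ 2)
    (hu : ∀ P ∈ S, ∀ Q ∈ S, ‖u P - u Q‖ ≤ b * ‖π P - π Q‖)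
    (hτu : ∀ P ∈ S, ∀ Q ∈ S, ‖π P - π Q‖ ^ 2 ≤ c * (‖u P - u Q‖ ^ 2 + |τ P - τ Q|))
    (hπ : ∀ P ∈ S, ∀ Q ∈ S, dist P Q ≤ K * ‖π P - π Q‖) :
    μH[Module.finrank ℝ E] S = 0 := by
  rcases S.eq_empty_or_nonempty with rfl | ⟨P₀, -⟩
  · exact measure_empty
  have : Nonempty X := ⟨P₀⟩
  set ψ := Function.invFunOn π S
  have hψ : ∀ P ∈ S, ψ (π P) = P := fun P hP => by
    have hex : ∃ Q ∈ S, π Q = π P := ⟨P, hP, rfl⟩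
    refine dist_le_zero.mp ((hπ _ (Function.invFunOn_mem hex) P hP).trans_eq ?_)
    rw [Function.invFunOn_eq hex, sub_self, norm_zero, mul_zero]
  have hnull : μH[Module.finrank ℝ E] (π '' S) = 0 := by
    refine addHaar_eq_zero_of_parabolic_coordinates _ hEF (τ := τ ∘ ψ) (u := u ∘ ψ) ha hb hc
      ?_ ?_ ?_ <;> rintro _ ⟨P, hP, rfl⟩ _ ⟨Q, hQ, rfl⟩ <;>
      simp only [Function.comp, hψ P hP, hψ Q hQ]
    exacts [hτ P hP Q hQ, hu P hP Q hQ, hτu P hP Q hQ]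
  have hlip : LipschitzOnWith K.toNNReal ψ (π '' S) := by
    refine LipschitzOnWith.of_dist_le_mul ?_
    rintro _ ⟨P, hP, rfl⟩ _ ⟨Q, hQ, rfl⟩
    rw [hψ P hP, hψ Q hQ, dist_eq_norm (π P)]
    exact (hπ P hP Q hQ).trans (by gcongr; exact Real.le_coe_toNNReal K)
  have hS : S ⊆ ψ '' (π '' S) := fun P hP => ⟨π P, mem_image_of_mem π hP, hψ P hP⟩
  refine measure_mono_null hS ?_
  exact nonpos_iff_eq_zero.mp ((hlip.hausdorffMeasure_image_le (by positivity)).trans_eq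
    (by rw [hnull, mul_zero]))

/-- **Corollary 3.4.** A horizontal `m`-Lipschitz graph and a vertical `m`-Lipschitz
graph intersect in a set of `ℋ^m` measure zero. -/
theorem horizontal_vertical_graph_intersection (n m : ℕ) (G G' : Set (Para n))
    (hG : ∃ L : ℝ, 0 < L ∧ ∃ V ∈ Horiz n m, IsLipGraphOver n m L V G)
    (hG' : ∃ L : ℝ, 0 < L ∧ ∃ V ∈ Vert n m, IsLipGraphOver n m L V G') :
    μH[(m : ℝ)] (G ∩ G') = 0 := by
  obtain ⟨L, hL, V, ⟨hVm, hV⟩, hGV⟩ := hG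
  obtain ⟨L', -, V', ⟨hV'm, hV'⟩, hGV'⟩ := hG'
  have hEF : Module.finrank ℝ (V.map xₗ) = Module.finrank ℝ (V'.map xₗ) + 2 := by
    have := finrank_map_xₗ_add_one_of_vertical hV'
    rw [finrank_map_xₗ_of_horizontal hV]
    omega
  have hcone : ∀ {P Q}, P ∈ G ∩ G' → Q ∈ G ∩ G' → P - Q ∈ lipCone V L ∧ P - Q ∈ lipCone V' L' :=
    fun hP hQ => ⟨hGV.sub_mem_lipCone hP.1 hQ.1, hGV'.sub_mem_lipCone hP.2 hQ.2⟩
  rw [← hVm, ← finrank_map_xₗ_of_horizontal hV]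
  refine hausdorffMeasure_eq_zero_of_parabolic_coordinates hEF (τ := t)
    (π := fun P => (V.map xₗ).orthogonalProjectionOnto P.x)
    (u := fun P => (V'.map xₗ).orthogonalProjectionOnto P.x) (sq_nonneg L) (b := 1 + L)
    (by positivity) (c := 1 + L' ^ 2) (by positivity) ?_ ?_ ?_ (K := 1 + L) ?_ <;>
    intro P hP Q hQ <;> simp only [← map_sub, ← x_sub, ← t_sub, dist_def]
  · exact abs_t_le_of_mem_lipCone hV (hcone hP hQ).1
  · exact (Submodule.norm_orthogonalProjectionOnto_apply_le _ _).trans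
      ((norm_x_le_pnorm _).trans (pnorm_le_of_mem_lipCone hV (hcone hP hQ).1))
  · exact (pow_le_pow_left₀ (norm_nonneg _)
      (Submodule.norm_orthogonalProjectionOnto_apply_le _ _) 2).trans
      (norm_x_sq_le_of_mem_lipCone hV' (hcone hP hQ).2)
  · exact pnorm_le_of_mem_lipCone hV (hcone hP hQ).1

end
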